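/- (Hurewicz dichotomy) For every analytic set A ⊆ ℕ^ℕ, exactly one of the following holds: (i) A is σ-compact; (ii) there is a set Y ⊆ A relatively closed in A and homeomorphic to ℕ^ℕ. -/

import Mathlib

open Set Filter Topology

namespace Stmt8

abbrev X := ℕ → ℕ

/-- Cylinder of a finite list. -/
def cyl (l : List ℕ) : Set X := {x | ∀ i : ℕ, ∀ h : i < l.length, x i = l.get ⟨i, h⟩}

/-- Prefix of `x` of length `n` as a list. -/
def pref (x : X) (n : ℕ) : List ℕ := List.ofFn (fun i : Fin n => x i)

@[simp] lemma length_pref (x : X) (n : ℕ) : (pref x n).length = n := by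
  simp [pref]

@[simp] lemma get_pref (x : X) (n : ℕ) (i : ℕ) (h : i < (pref x n).length) :
    (pref x n).get ⟨i, h⟩ = x i := by
  rw [List.get_eq_getElem]
  show (List.ofFn (fun i : Fin n => x i))[i] = x i
  exact List.getElem_ofFn ..

@[simp] lemma getElem_pref (x : X) (n : ℕ) (i : ℕ) (h : i < (pref x n).length) :
    (pref x n)[i] = x i := by
  show (List.ofFn (fun i : Fin n => x i))[i] = x i
  exact List.getElem_ofFn ..

lemma mem_cyl_pref (x : X) (n : ℕ) : x ∈ cyl (pref x n) := by
  intro i h; exact (get_pref x n i h).symm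

@[simp] lemma cyl_nil : cyl [] = univ := by
  ext x; simp [cyl]

lemma cyl_mono {l l' : List ℕ} (h : l <+: l') : cyl l' ⊆ cyl l := by
  intro x hx i hi
  have hi' : i < l'.length := lt_of_lt_of_le hi (h.length_le)
  have := hx i hi'
  rw [this]
  obtain ⟨t, rfl⟩ := h
  simp [List.getElem_append, hi]

lemma pref_eq_of_mem_cyl {x : X} {l : List ℕ} (h : x ∈ cyl l) : pref x l.length = l := by
  apply List.ext_get (by simp)
  intro i h1 h2
  rw [List.get_eq_getElem, List.get_eq_getElem]
  have := h i h2
  simp [pref, List.getElem_ofFn, this, List.get_eq_getElem]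

lemma prefix_pref_of_mem_cyl {x : X} {l : List ℕ} (h : x ∈ cyl l) {n : ℕ}
    (hn : l.length ≤ n) : l <+: pref x n := by
  have : pref x l.length <+: pref x n := by
    refine ⟨List.ofFn (fun i : Fin (n - l.length) => x (l.length + i)), ?_⟩
    apply List.ext_get (by simp [pref]; omega)
    intro i h1 h2
    rw [List.get_eq_getElem, List.get_eq_getElem]
    simp only [pref] at *
    rcases lt_or_ge i l.length with hc | hc
    · rw [List.getElem_append_left (by simpa using hc)]
      simp [List.getElem_ofFn]
    · rw [List.getElem_append_right (by simpa using hc)]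
      simp only [List.getElem_ofFn]
      congr 1
      simp only [List.length_ofFn] at hc ⊢
      omega
  rwa [pref_eq_of_mem_cyl h] at this

lemma mem_cyl_of_prefix {x : X} {l l' : List ℕ} (h : l <+: l') (hx : x ∈ cyl l') : x ∈ cyl l :=
  cyl_mono h hx

lemma isOpen_cyl (l : List ℕ) : IsOpen (cyl l) := by
  have : cyl l = ⋂ i : Fin l.length, (fun x : X => x i) ⁻¹' {l.get i} := by
    ext x; simp [cyl]
    constructor
    · intro h i; exact h i i.2
    · intro h i hi; exact h ⟨i, hi⟩
  rw [this]
  exact isOpen_iInter_of_finite fun i =>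
    (continuous_apply (i : ℕ)).isOpen_preimage _ (isOpen_discrete _)

lemma isClosed_cyl (l : List ℕ) : IsClosed (cyl l) := by
  have : cyl l = ⋂ i : Fin l.length, (fun x : X => x i) ⁻¹' {l.get i} := by
    ext x; simp [cyl]
    constructor
    · intro h i; exact h i i.2
    · intro h i hi; exact h ⟨i, hi⟩
  rw [this]
  exact isClosed_iInter fun i =>
    IsClosed.preimage (continuous_apply (i : ℕ)) (isClosed_discrete _)

/-- every open set around x contains a cylinder prefix neighborhood -/
lemma exists_pref_subset {U : Set X} (hU : IsOpen U) {x : X} (hx : x ∈ U) :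
    ∃ n, cyl (pref x n) ⊆ U := by
  obtain ⟨I, u, hIu, hsub⟩ := isOpen_pi_iff.1 hU x hx
  rcases I.eq_empty_or_nonempty with rfl | hne
  · exact ⟨0, by intro y _; apply hsub; simp⟩
  · obtain ⟨m, hm⟩ := I.exists_le
    refine ⟨m + 1, fun y hy => hsub ?_⟩
    intro i hi
    have him : i < m + 1 := Nat.lt_succ_of_le (hm i hi)
    have := hy i (by simpa using him)
    rw [get_pref] at this
    rw [this]
    exact (hIu i hi).2

lemma not_isCompact_cyl (l : List ℕ) : ¬ IsCompact (cyl l) := by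
  intro h
  have hsurj : ∀ j : ℕ, ∃ x ∈ cyl l, x l.length = j := by
    intro j
    refine ⟨fun i => if h : i < l.length then l.get ⟨i, h⟩ else j, fun i hi => by simp [hi], ?_⟩
    simp
  have himg : (fun x : X => x l.length) '' cyl l = univ := by
    apply eq_univ_of_forall
    intro j
    obtain ⟨x, hx, hxe⟩ := hsurj j
    exact ⟨x, hx, hxe⟩
  have : IsCompact (univ : Set ℕ) := by
    rw [← himg]; exact h.image (continuous_apply _)
  exact infinite_univ this.finite_of_discrete

lemma not_isSigmaCompact_univ : ¬ IsSigmaCompact (univ : Set X) := by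
  rintro ⟨K, hK, hKU⟩
  obtain ⟨n, hn⟩ := nonempty_interior_of_iUnion_of_closed
    (fun n => (hK n).isClosed) hKU
  obtain ⟨x, hx⟩ := hn
  obtain ⟨m, hm⟩ := exists_pref_subset isOpen_interior hx
  exact not_isCompact_cyl (pref x m)
    ((hK n).of_isClosed_subset (isClosed_cyl _) (hm.trans interior_subset))


section LightSec
variable (A : Set X)

/-- `S` is light if it is covered by a σ-compact subset of `A`. -/
def Light (S : Set X) : Prop := ∃ L : Set X, IsSigmaCompact L ∧ L ⊆ A ∧ S ⊆ L

variable {A}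

lemma Light.mono {S T : Set X} (h : Light A T) (hsub : S ⊆ T) : Light A S := by
  obtain ⟨L, h1, h2, h3⟩ := h; exact ⟨L, h1, h2, hsub.trans h3⟩

lemma light_empty : Light A (∅ : Set X) := ⟨∅, isSigmaCompact_empty, empty_subset _, empty_subset _⟩

lemma light_iUnion {ι : Type} [Countable ι] {S : ι → Set X} (h : ∀ i, Light A (S i)) :
    Light A (⋃ i, S i) := by
  choose L h1 h2 h3 using h
  exact ⟨⋃ i, L i, isSigmaCompact_iUnion _ h1, iUnion_subset h2, iUnion_mono h3⟩

lemma light_union {S T : Set X} (hS : Light A S) (hT : Light A T) : Light A (S ∪ T) := by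
  have : (S ∪ T) = ⋃ b : Bool, (if b then S else T) := by
    ext x; simp [Set.mem_iUnion]; tauto
  rw [this]
  apply light_iUnion
  intro b; cases b <;> simpa

lemma light_of_isCompact {K : Set X} (hK : IsCompact K) (hKA : K ⊆ A) : Light A K :=
  ⟨K, hK.isSigmaCompact, hKA, subset_rfl⟩

lemma Light.nonempty_of_not {S : Set X} (h : ¬ Light A S) : S.Nonempty := by
  rcases S.eq_empty_or_nonempty with rfl | hne
  · exact absurd light_empty h
  · exact hne

lemma sigma_iff_light :
    (∃ K : ℕ → Set X, (∀ n, IsCompact (K n)) ∧ A = ⋃ n, K n) ↔ Light A A := by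
  constructor
  · rintro ⟨K, hK, rfl⟩
    exact ⟨⋃ n, K n, isSigmaCompact_iUnion _ fun n => (hK n).isSigmaCompact,
      subset_rfl, subset_rfl⟩
  · rintro ⟨L, ⟨K, hK, hKL⟩, hLA, hAL⟩
    refine ⟨K, hK, ?_⟩
    rw [hKL]; exact subset_antisymm hAL hLA

end LightSec

section Main
variable (A : Set X) (f : X → X)

/-- Section of the analytic presentation below cylinder `c` with witness-cylinder `s`. -/
def Asec (c s : List ℕ) : Set X := {y | y ∈ cyl c ∧ ∃ x ∈ cyl s, f x = y}

def Heavy (c s : List ℕ) : Prop := ¬ Light A (Asec f c s)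

variable {A f}

lemma Asec_subset_cyl (c s : List ℕ) : Asec f c s ⊆ cyl c := fun _ h => h.1

lemma Asec_subset_range (c s : List ℕ) : Asec f c s ⊆ range f := by
  rintro y ⟨-, x, -, rfl⟩; exact mem_range_self x

lemma Asec_nil_nil : Asec f [] [] = range f := by
  ext y
  constructor
  · exact fun h => Asec_subset_range [] [] h
  · rintro ⟨x, rfl⟩
    exact ⟨by intro i h; simp at h, x, by intro i h; simp at h, rfl⟩

/-- Key extension lemma: localize a non-light part of a section into a deeper heavy section. -/
lemma exists_heavy_ext {c s d : List ℕ} (h : ¬ Light A (Asec f c s ∩ cyl d)) (k : ℕ) :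
    ∃ c' s' : List ℕ, d <+: c' ∧ s <+: s' ∧ k ≤ c'.length ∧ k ≤ s'.length ∧
      Heavy A f c' s' := by
  classical
  set m : ℕ := max (max d.length s.length) k with hm
  set T : List ℕ × List ℕ → Set X := fun p =>
    if d <+: p.1 ∧ s <+: p.2 ∧ m ≤ p.1.length ∧ m ≤ p.2.length then Asec f p.1 p.2 else ∅
    with hT
  have hcover : Asec f c s ∩ cyl d ⊆ ⋃ p, T p := by
    rintro y ⟨⟨hyc, x, hxs, hfx⟩, hyd⟩
    refine mem_iUnion.2 ⟨(pref y m, pref x m), ?_⟩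
    have h1 : d <+: pref y m := prefix_pref_of_mem_cyl hyd (by omega)
    have h2 : s <+: pref x m := prefix_pref_of_mem_cyl hxs (by omega)
    rw [hT]
    simp only
    rw [if_pos ⟨h1, h2, by rw [length_pref], by rw [length_pref]⟩]
    exact ⟨mem_cyl_pref y m, x, mem_cyl_pref x m, hfx⟩
  by_contra hcon
  push_neg at hcon
  have : ∀ p : List ℕ × List ℕ, Light A (T p) := by
    intro p
    rw [hT]
    simp only
    split_ifs with hcond
    · by_contra hlight
      obtain ⟨h1, h2, h3, h4⟩ := hcond
      exact absurd (hcon p.1 p.2 h1 h2 (le_trans (by omega) h3) (le_trans (by omega) h4)) 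
        (by simpa [Heavy] using hlight)
    · exact light_empty
  exact h ((light_iUnion this).mono hcover)

variable (A f) in
/-- Heavy points of a section. -/
def Hpts (c s : List ℕ) : Set X :=
  {q | ∀ m : ℕ, ¬ Light A (Asec f c s ∩ cyl (pref q m))}

lemma isClosed_Hpts (c s : List ℕ) : IsClosed (Hpts A f c s) := by
  rw [← isOpen_compl_iff]
  rw [isOpen_iff_forall_mem_open]
  intro q hq
  simp only [mem_compl_iff, Hpts, mem_setOf_eq] at hq
  push_neg at hq
  obtain ⟨m, hm⟩ := hq
  refine ⟨cyl (pref q m), ?_, isOpen_cyl _, mem_cyl_pref q m⟩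
  intro q' hq'
  simp only [mem_compl_iff, Hpts, mem_setOf_eq]
  push_neg
  refine ⟨m, ?_⟩
  have : pref q' m = pref q m := by
    have := pref_eq_of_mem_cyl hq'
    rwa [length_pref] at this
  rwa [this]

lemma mem_cyl_of_mem_Hpts {c s : List ℕ} {q : X} (hq : q ∈ Hpts A f c s) : q ∈ cyl c := by
  intro i hi
  have h := hq c.length
  obtain ⟨y, ⟨hyc, -⟩, hycyl⟩ := Light.nonempty_of_not h
  have h1 : y i = c.get ⟨i, hi⟩ := hyc i hi
  have h2 : y i = q i := by
    have := hycyl i (by rw [length_pref]; exact hi)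
    rw [this, get_pref]
  rw [← h2, h1]

lemma light_diff_Hpts (c s : List ℕ) : Light A (Asec f c s \ Hpts A f c s) := by
  classical
  set T : List ℕ → Set X := fun d =>
    if Light A (Asec f c s ∩ cyl d) then Asec f c s ∩ cyl d else ∅ with hT
  have hlight : ∀ d, Light A (T d) := by
    intro d; rw [hT]; simp only
    split_ifs with hc
    · exact hc
    · exact light_empty
  refine (light_iUnion hlight).mono ?_
  rintro y ⟨hy, hyn⟩
  simp only [Hpts, mem_setOf_eq] at hyn
  push_neg at hyn
  obtain ⟨m, hm⟩ := hyn
  refine mem_iUnion.2 ⟨pref y m, ?_⟩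
  rw [hT]; simp only
  rw [if_pos hm]
  exact ⟨hy, mem_cyl_pref y m⟩

lemma not_light_inter_Hpts {c s : List ℕ} (h : Heavy A f c s) :
    ¬ Light A (Asec f c s ∩ Hpts A f c s) := by
  intro hl
  apply h
  have : Asec f c s ⊆ (Asec f c s ∩ Hpts A f c s) ∪ (Asec f c s \ Hpts A f c s) := by
    intro y hy
    by_cases hc : y ∈ Hpts A f c s
    · exact Or.inl ⟨hy, hc⟩
    · exact Or.inr ⟨hy, hc⟩
  exact (light_union hl (light_diff_Hpts c s)).mono this

end Main

/-- the level-n prefix set of C -/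
def levelSet (C : Set X) (n : ℕ) : Set (List ℕ) := {l | ∃ q ∈ C, pref q n = l}

lemma levelSet_infinite_mono {C : Set X} {n n' : ℕ} (hn : n ≤ n')
    (h : (levelSet C n).Infinite) : (levelSet C n').Infinite := by
  intro hfin
  apply h
  have : levelSet C n ⊆ (fun l : List ℕ => l.take n) '' levelSet C n' := by
    rintro l ⟨q, hq, rfl⟩
    refine ⟨pref q n', ⟨q, hq, rfl⟩, ?_⟩
    apply List.ext_getElem
    · simp [length_pref, List.length_take]; omega
    · intro i h1 h2
      rw [List.getElem_take, getElem_pref, getElem_pref]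
  exact Finite.subset (Finite.image _ hfin) this

lemma isCompact_of_levels_finite {C : Set X} (hC : IsClosed C)
    (h : ∀ n, (levelSet C n).Finite) : IsCompact C := by
  set B : ℕ → Set ℕ := fun i => (fun q : X => q i) '' C with hB
  have hBfin : ∀ i, (B i).Finite := by
    intro i
    have : B i ⊆ (fun l : List ℕ => l.getD i 0) '' levelSet C (i + 1) := by
      rintro j ⟨q, hq, rfl⟩
      refine ⟨pref q (i+1), ⟨q, hq, rfl⟩, ?_⟩
      show (pref q (i+1)).getD i 0 = q i
      rw [List.getD_eq_getElem _ _ (by rw [length_pref]; omega), getElem_pref]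
    exact Finite.subset (Finite.image _ (h (i+1))) this
  have hsub : C ⊆ univ.pi B := by
    intro q hq i _
    exact ⟨q, hq, rfl⟩
  exact (isCompact_univ_pi fun i => (hBfin i).isCompact).of_isClosed_subset hC hsub

lemma exists_infinite_level {C : Set X} (hC : IsClosed C) (h : ¬ IsCompact C) {n₀ : ℕ} :
    ∃ n, n₀ ≤ n ∧ (levelSet C n).Infinite := by
  by_contra hcon
  push_neg at hcon
  apply h
  apply isCompact_of_levels_finite hC
  intro n
  by_contra hinf
  rw [← Set.not_infinite, not_not] at hinf
  exact (levelSet_infinite_mono (le_max_left _ _) hinf)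
    (hcon (max n n₀) (le_max_right _ _))


-- helper lemmas
lemma eq_of_mem_cyl_pref {z q : X} {n : ℕ} (h : z ∈ cyl (pref q n)) {i : ℕ} (hi : i < n) :
    z i = q i := by
  have := h i (by rw [length_pref]; exact hi)
  rwa [get_pref] at this

lemma pref_eq_pref_of_agree {x y : X} {N : ℕ} (h : ∀ i < N, x i = y i) :
    pref x N = pref y N := by
  apply List.ext_get (by rw [length_pref, length_pref])
  intro i h1 h2
  rw [get_pref, get_pref]
  exact h i (by rw [length_pref] at h1; exact h1)

lemma eventually_coord_eq {z : ℕ → X} {y : X} (h : Tendsto z atTop (𝓝 y)) (i : ℕ) :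
    ∀ᶠ k in atTop, z k i = y i := by
  have h1 := tendsto_pi_nhds.1 h i
  rw [nhds_discrete] at h1
  exact tendsto_pure.1 h1

lemma eventually_agree_upto {z : ℕ → X} {y : X} (h : Tendsto z atTop (𝓝 y)) (N : ℕ) :
    ∀ᶠ k in atTop, ∀ i < N, z k i = y i := by
  have : ∀ᶠ k in atTop, ∀ i ∈ Finset.range N, z k i = y i :=
    (Filter.eventually_all_finset _).2 fun i _ => eventually_coord_eq h i
  filter_upwards [this] with k hk i hi
  exact hk i (Finset.mem_range.2 hi)

lemma mem_cyl_append_last {y : X} {l : List ℕ} {j : ℕ} (h : y ∈ cyl (l ++ [j])) :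
    y l.length = j := by
  have h2 := h l.length (by simp)
  rw [List.get_eq_getElem] at h2
  rw [h2]
  exact List.getElem_concat_length rfl _

/-- The key dichotomy: every heavy node admits a countable family of heavy children whose
cylinders are pairwise disjoint and accumulate only outside `A`. -/
lemma exists_children {A : Set X} {f : X → X} (hAf : range f ⊆ A) {c s : List ℕ}
    (h : Heavy A f c s) :
    ∃ ch : ℕ → List ℕ × List ℕ,
      (∀ i, Heavy A f (ch i).1 (ch i).2) ∧
      (∀ i, c <+: (ch i).1 ∧ c.length < (ch i).1.length) ∧
      (∀ i, s <+: (ch i).2 ∧ s.length < (ch i).2.length) ∧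
      (∀ i j, i ≠ j → ∀ y, y ∈ cyl (ch i).1 → y ∉ cyl (ch j).1) ∧
      (∀ ι : ℕ → ℕ, Function.Injective ι → ∀ z : ℕ → X,
        (∀ k, z k ∈ cyl (ch (ι k)).1) → ∀ y, Tendsto z atTop (𝓝 y) → y ∉ A) := by
  classical
  by_cases hcpt : IsCompact (Hpts A f c s)
  · -- compact case: find q ∈ Hpts \ A, children accumulate at q
    -- first: Hpts ⊄ A
    have hHq : ∃ q ∈ Hpts A f c s, q ∉ A := by
      by_contra hcon
      push_neg at hcon
      apply h
      have hsplit : Asec f c s ⊆ (Asec f c s \ Hpts A f c s) ∪ Hpts A f c s := by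
        intro y hy
        by_cases hc : y ∈ Hpts A f c s
        · exact Or.inr hc
        · exact Or.inl ⟨hy, hc⟩
      exact (light_union (light_diff_Hpts c s) (light_of_isCompact hcpt hcon)).mono hsplit
    obtain ⟨q, hq, hqA⟩ := hHq
    -- the ring claim
    have ring : ∀ M : ℕ, ∃ m, M ≤ m ∧ ∃ j, j ≠ q m ∧
        ¬ Light A (Asec f c s ∩ cyl (pref q m ++ [j])) := by
      intro M
      by_contra hcon
      push_neg at hcon
      apply hq M
      set T : ℕ × ℕ → Set X := fun p =>
        if M ≤ p.1 ∧ p.2 ≠ q p.1 then Asec f c s ∩ cyl (pref q p.1 ++ [p.2]) else ∅ with hT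
      have hlight : ∀ p, Light A (T p) := by
        intro p
        rw [hT]; simp only
        split_ifs with hcond
        · exact hcon p.1 hcond.1 p.2 hcond.2
        · exact light_empty
      refine (light_iUnion hlight).mono ?_
      rintro y ⟨hy, hycyl⟩
      have hyA : y ∈ A := hAf (Asec_subset_range c s hy)
      have hyq : y ≠ q := fun hh => hqA (hh ▸ hyA)
      have hne : ∃ m, y m ≠ q m := by
        by_contra hc; push_neg at hc; exact hyq (funext hc)
      set m := Nat.find hne with hmdef
      have hm : y m ≠ q m := Nat.find_spec hne
      have hmin : ∀ i < m, y i = q i := fun i hi => not_not.1 (Nat.find_min hne hi)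
      have hMm : M ≤ m := by
        by_contra hc
        push_neg at hc
        exact hm (eq_of_mem_cyl_pref hycyl hc)
      refine mem_iUnion.2 ⟨(m, y m), ?_⟩
      rw [hT]; simp only
      rw [if_pos ⟨hMm, hm⟩]
      refine ⟨hy, ?_⟩
      intro i hi
      rw [List.get_eq_getElem]
      have hi' : i < m + 1 := by
        rw [List.length_append, length_pref] at hi; simpa using hi
      rcases lt_or_ge i m with hc | hc
      · rw [List.getElem_append_left (by rw [length_pref]; exact hc), getElem_pref]
        exact hmin i hc
      · have heq : i = m := by omega
        subst heq
        exact (List.getElem_concat_length (l := pref q m) (a := y m) (i := m) (by rw [length_pref]) _).symm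
    -- build the sequence of rings
    choose F hFle J hJne hJheavy using ring
    set M : ℕ → ℕ := fun i => Nat.rec (c.length + 1) (fun _ prev => F prev + 1) i with hM
    have hM0 : M 0 = c.length + 1 := rfl
    have hMsucc : ∀ i, M (i + 1) = F (M i) + 1 := fun i => rfl
    set m : ℕ → ℕ := fun i => F (M i) with hm
    have hmM : ∀ i, M i ≤ m i := fun i => hFle (M i)
    have hmono : StrictMono m := by
      apply strictMono_nat_of_lt_succ
      intro i
      have : m i + 1 = M (i + 1) := (hMsucc i).symm
      calc m i < m i + 1 := Nat.lt_succ_self _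
        _ = M (i+1) := this
        _ ≤ m (i+1) := hmM (i+1)
    have hmc : ∀ i, c.length < m i := by
      intro i
      have h1 : M 0 ≤ M i := by
        induction i with
        | zero => exact le_refl _
        | succ n ih => exact le_trans ih (by rw [hMsucc]; exact Nat.le_succ_of_le (hFle _))
      have := hmM i
      omega
    have hmge : ∀ i, i ≤ m i := fun i => hmono.le_apply
    -- children
    have hex : ∀ i, ∃ c' s' : List ℕ, (pref q (m i) ++ [J (M i)]) <+: c' ∧ s <+: s' ∧
        (s.length + 1) ≤ c'.length ∧ (s.length + 1) ≤ s'.length ∧ Heavy A f c' s' :=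
      fun i => exists_heavy_ext (hJheavy (M i)) (s.length + 1)
    choose c' s' hd hs hlc hls hH using hex
    refine ⟨fun i => (c' i, s' i), hH, ?_, ?_, ?_, ?_⟩
    · intro i
      show c <+: c' i ∧ c.length < (c' i).length
      have h1 : c <+: pref q (m i) := prefix_pref_of_mem_cyl (mem_cyl_of_mem_Hpts hq)
        (le_of_lt (hmc i))
      have h2 : pref q (m i) <+: pref q (m i) ++ [J (M i)] := List.prefix_append _ _
      refine ⟨(h1.trans h2).trans (hd i), ?_⟩
      have h3 := (hd i).length_le
      rw [List.length_append, length_pref] at h3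
      simp only [List.length_singleton] at h3
      have := hmc i
      omega
    · intro i
      show s <+: s' i ∧ s.length < (s' i).length
      exact ⟨hs i, by have := hls i; omega⟩
    · -- sibling disjointness
      have key : ∀ i j, i < j → ∀ y, y ∈ cyl (c' i) → y ∈ cyl (c' j) → False := by
        intro i j hlt y hyi hyj
        have h1 : y ∈ cyl (pref q (m i) ++ [J (M i)]) := cyl_mono (hd i) hyi
        have h2 : y ∈ cyl (pref q (m j)) :=
          cyl_mono ((List.prefix_append _ _).trans (hd j)) hyj
        have e1 : y (m i) = J (M i) := by
          have := mem_cyl_append_last h1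
          rwa [length_pref] at this
        have e2 : y (m i) = q (m i) := eq_of_mem_cyl_pref h2 (hmono hlt)
        exact hJne (M i) (e1.symm.trans e2)
      intro i j hij y hyi hyj
      rcases Nat.lt_or_ge i j with hlt | hge
      · exact key i j hlt y hyi hyj
      · exact key j i (lt_of_le_of_ne hge (Ne.symm hij)) y hyj hyi
    · -- limit property
      intro ι hι z hz y hy
      have hyq : y = q := by
        funext i
        have hev : ∀ᶠ k in atTop, z k i = y i := eventually_coord_eq hy i
        have hfin : {k | ¬ i < m (ι k)}.Finite := by
          apply Set.Finite.subset (Set.Finite.preimage (hι.injOn) (Set.finite_Iic i))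
          intro k hk
          simp only [mem_setOf_eq, not_lt] at hk
          have := hmge (ι k)
          simp only [mem_preimage, mem_Iic]
          omega
        have hev2 : ∀ᶠ k in atTop, i < m (ι k) := by
          rw [Filter.eventually_atTop]
          rcases hfin.bddAbove with ⟨B, hB⟩
          refine ⟨B + 1, fun k hk => ?_⟩
          by_contra hc
          have := hB (show k ∈ {k | ¬ i < m (ι k)} from hc)
          omega
        obtain ⟨k, h1, h2⟩ := (hev.and hev2).exists
        have h3 : z k ∈ cyl (pref q (m (ι k))) :=
          cyl_mono ((List.prefix_append _ _).trans (hd (ι k))) (hz k)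
        rw [← h1]
        exact eq_of_mem_cyl_pref h3 h2
      rw [hyq]; exact hqA
  · -- non-compact case: discrete children
    obtain ⟨N, hN1, hN2⟩ := exists_infinite_level (isClosed_Hpts c s) hcpt
      (n₀ := c.length + 1)
    set e := hN2.natEmbedding with he
    have hqex : ∀ i : ℕ, ∃ q ∈ Hpts A f c s, pref q N = ((e i : ↥(levelSet (Hpts A f c s) N)) :
        List ℕ) := fun i => (e i).2
    choose q hq hqp using hqex
    have hex : ∀ i, ∃ c' s' : List ℕ, pref (q i) N <+: c' ∧ s <+: s' ∧
        (s.length + 1) ≤ c'.length ∧ (s.length + 1) ≤ s'.length ∧ Heavy A f c' s' :=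
      fun i => exists_heavy_ext (hq i N) (s.length + 1)
    choose c' s' hd hs hlc hls hH using hex
    -- any member of cyl (c' i) has N-prefix equal to (e i)
    have hpfx : ∀ i (y : X), y ∈ cyl (c' i) → pref y N = (e i : List ℕ) := by
      intro i y hy
      have h1 : y ∈ cyl (pref (q i) N) := cyl_mono (hd i) hy
      have h2 : pref y (pref (q i) N).length = pref (q i) N := pref_eq_of_mem_cyl h1
      rw [length_pref] at h2
      rw [h2, hqp i]
    refine ⟨fun i => (c' i, s' i), hH, ?_, ?_, ?_, ?_⟩
    · intro i
      show c <+: c' i ∧ c.length < (c' i).length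
      have h1 : c <+: pref (q i) N := prefix_pref_of_mem_cyl (mem_cyl_of_mem_Hpts (hq i))
        (by omega)
      refine ⟨h1.trans (hd i), ?_⟩
      have h3 := (hd i).length_le
      rw [length_pref] at h3
      omega
    · intro i
      show s <+: s' i ∧ s.length < (s' i).length
      exact ⟨hs i, by have := hls i; omega⟩
    · -- disjointness: distinct N-prefixes
      intro i j hij y hyi hyj
      apply hij
      have h1 := hpfx i y hyi
      have h2 := hpfx j y hyj
      rw [h1] at h2
      exact e.injective (Subtype.ext h2)
    · -- limit property: no convergence at all across infinitely many children
      intro ι hι z hz y hy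
      exfalso
      have hev : ∀ᶠ k in atTop, ∀ i < N, z k i = y i := eventually_agree_upto hy N
      rw [Filter.eventually_atTop] at hev
      obtain ⟨K, hK⟩ := hev
      have h1 : pref (z K) N = pref y N := pref_eq_pref_of_agree (hK K (le_refl _))
      have h2 : pref (z (K+1)) N = pref y N := pref_eq_pref_of_agree (hK (K+1) (by omega))
      have h3 : (e (ι K) : List ℕ) = (e (ι (K+1)) : List ℕ) := by
        rw [← hpfx _ _ (hz K), ← hpfx _ _ (hz (K+1)), h1, h2]
      have := e.injective (Subtype.ext h3)
      have := hι this
      omega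


/-- Extraction of an injective-valued subsequence when all fibers are finite. -/
lemma extract_injective (i_ : ℕ → ℕ) (hfib : ∀ i, {k | i_ k = i}.Finite) :
    ∃ k_ : ℕ → ℕ, StrictMono k_ ∧ Function.Injective (i_ ∘ k_) := by
  classical
  have step : ∀ K : ℕ, ∃ k, K < k ∧ ∀ k' ≤ K, i_ k ≠ i_ k' := by
    intro K
    have hBad : {k | ∃ k' ≤ K, i_ k = i_ k'}.Finite := by
      have hsub : {k | ∃ k' ≤ K, i_ k = i_ k'} ⊆
          ⋃ k' ∈ Finset.range (K+1), {k | i_ k = i_ k'} := by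
        rintro k ⟨k', hk', he⟩
        exact mem_biUnion (Finset.mem_range.2 (by omega)) he
      exact Finite.subset (Set.Finite.biUnion (Finset.range (K+1)).finite_toSet
        (fun k' _ => hfib (i_ k'))) hsub
    obtain ⟨B, hB⟩ := (hBad.union (finite_Iic K)).bddAbove
    refine ⟨B + 1, ?_, ?_⟩
    · have : K ≤ B := hB (Or.inr (mem_Iic.2 (le_refl K)))
      omega
    · intro k' hk' he
      have : B + 1 ≤ B := hB (Or.inl ⟨k', hk', he⟩)
      omega
  choose nxt hnxt1 hnxt2 using step
  set k_ : ℕ → ℕ := fun t => Nat.rec (nxt 0) (fun _ prev => nxt prev) t with hk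
  have hmono : StrictMono k_ := strictMono_nat_of_lt_succ fun t => hnxt1 (k_ t)
  refine ⟨k_, hmono, ?_⟩
  have key : ∀ s t, s < t → i_ (k_ t) ≠ i_ (k_ s) := by
    intro s t hst
    obtain ⟨u, rfl⟩ : ∃ u, t = u + 1 := ⟨t - 1, by omega⟩
    have h1 : k_ s ≤ k_ u := hmono.le_iff_le.2 (by omega)
    exact hnxt2 (k_ u) (k_ s) h1
  intro s t hst
  simp only [Function.comp] at hst
  rcases lt_trichotomy s t with hc | hc | hc
  · exact absurd hst.symm (key s t hc)
  · exact hc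
  · exact absurd hst (key t s hc)

section Constr
variable {A : Set X} {f : X → X}

theorem main_construction (hfc : Continuous f) (hAf : range f = A) (hheavy : ¬ Light A A) :
    ∃ Y C : Set X, IsClosed C ∧ Y = A ∩ C ∧ Nonempty (Y ≃ₜ X) := by
  classical
  have hsub : range f ⊆ A := hAf.le
  have hroot : Heavy A f [] [] := by
    rw [Heavy, Asec_nil_nil, hAf]; exact hheavy
  -- children chooser
  choose ch hch1 hch2 hch3 hch4 hch5 using
    fun p : {p : List ℕ × List ℕ // Heavy A f p.1 p.2} => exists_children hsub p.2
  -- the scheme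
  set node : List ℕ → {p : List ℕ × List ℕ // Heavy A f p.1 p.2} :=
    fun v => List.rec ⟨([], []), hroot⟩ (fun i _ ih => ⟨ch ih i, hch1 ih i⟩) v with hnode
  have node_nil : node [] = ⟨([], []), hroot⟩ := rfl
  have node_cons : ∀ i v, node (i :: v) = ⟨ch (node v) i, hch1 (node v) i⟩ := fun i v => rfl
  set cN : List ℕ → List ℕ := fun v => (node v).1.1 with hcN
  set sN : List ℕ → List ℕ := fun v => (node v).1.2 with hsN
  have hc_ext : ∀ i v, cN v <+: cN (i :: v) ∧ (cN v).length < (cN (i :: v)).length :=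
    fun i v => hch2 (node v) i
  have hs_ext : ∀ i v, sN v <+: sN (i :: v) ∧ (sN v).length < (sN (i :: v)).length :=
    fun i v => hch3 (node v) i
  have hc_len : ∀ v : List ℕ, v.length ≤ (cN v).length := by
    intro v
    induction v with
    | nil => simp
    | cons i v ih =>
      have := (hc_ext i v).2
      simp only [List.length_cons]
      omega
  have hs_len : ∀ v : List ℕ, v.length ≤ (sN v).length := by
    intro v
    induction v with
    | nil => simp
    | cons i v ih =>
      have := (hs_ext i v).2
      simp only [List.length_cons]
      omega
  -- branch prefixes
  set vb : X → ℕ → List ℕ := fun b n => Nat.rec [] (fun k ih => b k :: ih) n with hvb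
  have vb_zero : ∀ b, vb b 0 = [] := fun b => rfl
  have vb_succ : ∀ b n, vb b (n + 1) = b n :: vb b n := fun b n => rfl
  have vb_len : ∀ b n, (vb b n).length = n := by
    intro b n
    induction n with
    | zero => rfl
    | succ n ih => rw [vb_succ]; simp [ih]
  have cvb_mono : ∀ b {n n'}, n ≤ n' → cN (vb b n) <+: cN (vb b n') := by
    intro b n n' h
    induction n' with
    | zero => have : n = 0 := by omega
              subst this; exact List.prefix_refl _
    | succ k ih =>
      rcases Nat.lt_or_ge n (k+1) with hc | hc
      · exact (ih (by omega)).trans (by rw [vb_succ]; exact (hc_ext (b k) (vb b k)).1)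
      · have : n = k + 1 := by omega
        subst this; exact List.prefix_refl _
  have svb_mono : ∀ b {n n'}, n ≤ n' → sN (vb b n) <+: sN (vb b n') := by
    intro b n n' h
    induction n' with
    | zero => have : n = 0 := by omega
              subst this; exact List.prefix_refl _
    | succ k ih =>
      rcases Nat.lt_or_ge n (k+1) with hc | hc
      · exact (ih (by omega)).trans (by rw [vb_succ]; exact (hs_ext (b k) (vb b k)).1)
      · have : n = k + 1 := by omega
        subst this; exact List.prefix_refl _
  have hc_len_vb : ∀ b n, n ≤ (cN (vb b n)).length := by
    intro b n; have := hc_len (vb b n); rwa [vb_len] at this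
  have hs_len_vb : ∀ b n, n ≤ (sN (vb b n)).length := by
    intro b n; have := hs_len (vb b n); rwa [vb_len] at this
  -- the embedding
  set Φ : X → X := fun b m => (cN (vb b (m + 1))).getD m 0 with hΦ
  have Φcoord : ∀ b n m, (h : m < (cN (vb b n)).length) → Φ b m = (cN (vb b n)).get ⟨m, h⟩ := by
    intro b n m h
    rcases le_or_gt n (m+1) with hc | hc
    · have hpfx := cvb_mono b hc
      rw [hΦ]
      simp only
      rw [List.getD_eq_getElem _ _ (lt_of_lt_of_le h hpfx.length_le), List.get_eq_getElem]
      exact (hpfx.getElem h).symm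
    · have hpfx := cvb_mono b (show m+1 ≤ n by omega)
      have hm : m < (cN (vb b (m+1))).length := lt_of_lt_of_le (Nat.lt_succ_self m)
        (hc_len_vb b (m+1))
      rw [hΦ]
      simp only
      rw [List.getD_eq_getElem _ _ hm, List.get_eq_getElem]
      exact hpfx.getElem hm
  have Φmem : ∀ b n, Φ b ∈ cyl (cN (vb b n)) := by
    intro b n m h
    exact Φcoord b n m h
  have Φuniq : ∀ b v, Φ b ∈ cyl (cN v) → v = vb b v.length := by
    intro b v
    induction v with
    | nil => intro _; rfl
    | cons i v ih =>
      intro hmem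
      have h1 : Φ b ∈ cyl (cN v) := cyl_mono (hc_ext i v).1 hmem
      have h2 : v = vb b v.length := ih h1
      by_cases hc : i = b v.length
      · subst hc
        simp only [List.length_cons]
        rw [vb_succ, ← h2]
      · exfalso
        have h3 : Φ b ∈ cyl (cN (b v.length :: v)) := by
          have := Φmem b (v.length + 1)
          rw [vb_succ, ← h2] at this
          exact this
        exact hch4 (node v) i (b v.length) hc (Φ b) hmem h3
  have Φinj : Function.Injective Φ := by
    intro b b' he
    have hvbeq : ∀ n, vb b' n = vb b n := by
      intro n
      have h1 : Φ b ∈ cyl (cN (vb b' n)) := by rw [he]; exact Φmem b' n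
      have := Φuniq b (vb b' n) h1
      rwa [vb_len] at this
    funext n
    have h1 := hvbeq (n+1)
    rw [vb_succ, vb_succ, hvbeq n] at h1
    exact ((List.cons.injEq _ _ _ _ ▸ h1).1).symm
  -- range Φ lands in A
  have ΦmemA : ∀ b, Φ b ∈ A := by
    intro b
    -- pick points in each section along the branch
    have hne : ∀ n : ℕ, (Asec f (cN (vb b n)) (sN (vb b n))).Nonempty :=
      fun n => Light.nonempty_of_not (node (vb b n)).2
    choose y hy using hne
    have hy1 : ∀ n, y n ∈ cyl (cN (vb b n)) := fun n => (hy n).1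
    have hy2 : ∀ n, ∃ x ∈ cyl (sN (vb b n)), f x = y n := fun n => (hy n).2
    choose x hx hfx using hy2
    -- limit of the witnesses
    set xinf : X := fun m => (sN (vb b (m + 1))).getD m 0 with hxinfdef
    have hxcoord : ∀ n m, m < n → x n m = xinf m := by
      intro n m hmn
      have hpfx : sN (vb b (m+1)) <+: sN (vb b n) := svb_mono b (show m+1 ≤ n by omega)
      have hm1 : m < (sN (vb b (m+1))).length :=
        lt_of_lt_of_le (Nat.lt_succ_self m) (hs_len_vb b (m+1))
      have h1 : x n m = (sN (vb b n)).get ⟨m, lt_of_lt_of_le hm1 hpfx.length_le⟩ :=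
        hx n m _
      rw [h1, hxinfdef]
      simp only
      rw [List.getD_eq_getElem _ _ hm1, List.get_eq_getElem]
      exact (hpfx.getElem hm1).symm
    have hxt : Tendsto x atTop (𝓝 xinf) := by
      rw [tendsto_pi_nhds]
      intro m
      rw [nhds_discrete]
      rw [tendsto_pure]
      filter_upwards [eventually_ge_atTop (m+1)] with n hn
      exact hxcoord n m (by omega)
    have hyt : Tendsto y atTop (𝓝 (Φ b)) := by
      rw [tendsto_pi_nhds]
      intro m
      rw [nhds_discrete, tendsto_pure]
      filter_upwards [eventually_ge_atTop (m+1)] with n hn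
      have hm : m < (cN (vb b n)).length :=
        lt_of_lt_of_le (by omega : m < n) (hc_len_vb b n)
      rw [hy1 n m hm]
      exact (Φcoord b n m hm).symm
    have hft : Tendsto (fun n => f (x n)) atTop (𝓝 (f xinf)) := (hfc.tendsto xinf).comp hxt
    have : Φ b = f xinf := by
      apply tendsto_nhds_unique hyt
      have : (fun n => f (x n)) = y := funext hfx
      rwa [this] at hft
    rw [this, ← hAf]
    exact mem_range_self xinf
  -- closedness within A
  have hclosed : A ∩ closure (range Φ) ⊆ range Φ := by
    rintro y0 ⟨hy0A, hy0cl⟩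
    set Good : List ℕ → Prop := fun v => y0 ∈ closure (range Φ ∩ cyl (cN v)) with hGood
    have good_nil : Good [] := by
      simp only [hGood]
      have : cN [] = [] := rfl
      rw [this, cyl_nil, inter_univ]
      exact hy0cl
    by_cases hbr : ∀ v, Good v → ∃ i, Good (i :: v)
    · -- a branch of good nodes: y0 = Φ b
      set g : {v // Good v} → {v // Good v} :=
        fun p => ⟨(hbr p.1 p.2).choose :: p.1, (hbr p.1 p.2).choose_spec⟩ with hg
      set sq : ℕ → {v // Good v} := fun n => g^[n] ⟨[], good_nil⟩ with hsq
      have hsq_succ : ∀ n, sq (n+1) = g (sq n) := by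
        intro n
        rw [hsq]
        exact Function.iterate_succ_apply' g n _
      set b : X := fun n => ((sq (n+1)).1).headI with hb
      have hsqvb : ∀ n, (sq n).1 = vb b n := by
        intro n
        induction n with
        | zero => rfl
        | succ k ih =>
          have h1 : (sq (k+1)).1 = (hbr (sq k).1 (sq k).2).choose :: (sq k).1 := by
            rw [hsq_succ k]
          have h2 : b k = (hbr (sq k).1 (sq k).2).choose := by
            show ((sq (k+1)).1).headI = _
            rw [h1]
            rfl
          rw [vb_succ, ← ih, h2]
          exact h1
      have hgood_vb : ∀ n, Good (vb b n) := fun n => (hsqvb n) ▸ (sq n).2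
      have : y0 = Φ b := by
        funext m
        have hgm := hgood_vb (m+1)
        simp only [hGood] at hgm
        have hy0m : y0 ∈ cyl (cN (vb b (m+1))) :=
          (isClosed_cyl _).closure_subset
            ((closure_mono inter_subset_right) hgm)
        have hm : m < (cN (vb b (m+1))).length :=
          lt_of_lt_of_le (Nat.lt_succ_self m) (hc_len_vb b (m+1))
        rw [hy0m m hm]
        exact (Φcoord b (m+1) m hm).symm
      rw [this]
      exact mem_range_self b
    · -- a maximal good node: contradiction with y0 ∈ A
      exfalso
      push_neg at hbr
      obtain ⟨v, hGv, hnochild⟩ := hbr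
      simp only [hGood] at hGv
      obtain ⟨w, hw, hwt⟩ := mem_closure_iff_seq_limit.1 hGv
      have hwb : ∀ k, ∃ b, Φ b = w k := fun k => (hw k).1
      choose bk hbk using hwb
      set i_ : ℕ → ℕ := fun k => bk k v.length with hi_
      have hwcyl : ∀ k, w k ∈ cyl (cN (i_ k :: v)) := by
        intro k
        have h1 : Φ (bk k) ∈ cyl (cN v) := by rw [hbk k]; exact (hw k).2
        have h2 : v = vb (bk k) v.length := Φuniq (bk k) v h1
        have h3 := Φmem (bk k) (v.length + 1)
        rw [vb_succ, ← h2] at h3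
        rw [← hbk k]
        exact h3
      have hfib : ∀ i, {k | i_ k = i}.Finite := by
        intro i
        by_contra hinf
        rw [← Set.not_infinite, not_not] at hinf
        apply hnochild i
        simp only [hGood]
        rw [mem_closure_iff_nhds]
        intro U hU
        have hev : ∀ᶠ k in atTop, w k ∈ U := hwt hU
        rw [Filter.eventually_atTop] at hev
        obtain ⟨K, hK⟩ := hev
        obtain ⟨k, hk1, hk2⟩ := hinf.exists_gt K
        refine ⟨w k, hK k (by omega), (hw k).1, ?_⟩
        have := hwcyl k
        rwa [show i_ k = i from hk1] at this
      obtain ⟨k_, hkmono, hkinj⟩ := extract_injective i_ hfib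
      have := hch5 (node v) (fun t => i_ (k_ t)) hkinj (fun t => w (k_ t))
        (fun t => hwcyl (k_ t)) y0 (hwt.comp hkmono.tendsto_atTop)
      exact this hy0A
  -- agreement lemma for vb
  have vb_agree : ∀ (b b' : X) (n : ℕ), (∀ i < n, b i = b' i) → vb b n = vb b' n := by
    intro b b' n
    induction n with
    | zero => intro _; rfl
    | succ k ih =>
      intro hag
      rw [vb_succ, vb_succ, hag k (by omega), ih (fun i hi => hag i (by omega))]
  -- continuity of Φ
  have Φcont : Continuous Φ := by
    apply continuous_pi
    intro m
    apply IsLocallyConstant.continuous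
    rw [IsLocallyConstant.iff_exists_open]
    intro b
    refine ⟨⋂ i : Fin (m+1), (fun b' : X => b' (i : ℕ)) ⁻¹' {b (i : ℕ)}, ?_, ?_, ?_⟩
    · exact isOpen_iInter_of_finite fun i =>
        (continuous_apply (i : ℕ)).isOpen_preimage _ (isOpen_discrete _)
    · simp
    · intro b' hb'
      simp only [mem_iInter, mem_preimage, mem_singleton_iff] at hb'
      have hag : ∀ i < m + 1, b' i = b i := fun i hi => hb' ⟨i, hi⟩
      show (cN (vb b' (m + 1))).getD m 0 = (cN (vb b (m + 1))).getD m 0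
      rw [vb_agree b' b (m+1) hag]
  -- the homeomorphism X ≃ₜ range Φ
  set Φ' : X → ↥(range Φ) := fun b => ⟨Φ b, mem_range_self b⟩ with hΦ'
  have hbij : Function.Bijective Φ' := by
    constructor
    · intro b b' he
      exact Φinj (congrArg Subtype.val he)
    · rintro ⟨y, b, rfl⟩
      exact ⟨b, rfl⟩
  set e : X ≃ ↥(range Φ) := Equiv.ofBijective Φ' hbij with he
  have he_coe : ∀ b, ((e b : ↥(range Φ)) : X) = Φ b := fun b => rfl
  have hsymm : ∀ y : ↥(range Φ), Φ (e.symm y) = (y : X) := by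
    intro y
    have := e.apply_symm_apply y
    calc Φ (e.symm y) = ((e (e.symm y) : ↥(range Φ)) : X) := rfl
      _ = (y : X) := by rw [this]
  have hsymm_cont : Continuous (fun y : ↥(range Φ) => (e.symm y : X)) := by
    apply continuous_pi
    intro n
    apply IsLocallyConstant.continuous
    rw [IsLocallyConstant.iff_exists_open]
    intro y
    set b0 : X := e.symm y with hb0
    refine ⟨(fun y' : ↥(range Φ) => (y' : X)) ⁻¹' cyl (cN (vb b0 (n+1))), ?_, ?_, ?_⟩
    · exact continuous_subtype_val.isOpen_preimage _ (isOpen_cyl _)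
    · show (y : X) ∈ cyl (cN (vb b0 (n+1)))
      rw [← hsymm y]
      exact Φmem b0 (n+1)
    · intro y' hy'
      have h1 : Φ (e.symm y') ∈ cyl (cN (vb b0 (n+1))) := by
        rw [hsymm y']
        exact hy'
      have h2 := Φuniq (e.symm y') (vb b0 (n+1)) h1
      rw [vb_len b0 (n+1)] at h2
      have h3 : vb b0 (n+1) = vb (e.symm y') (n+1) := h2
      rw [vb_succ, vb_succ] at h3
      exact ((List.cons.injEq _ _ _ _ ▸ h3).1).symm
  have hhomeo : X ≃ₜ ↥(range Φ) :=
    { toEquiv := e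
      continuous_toFun := by
        show Continuous Φ'
        exact Φcont.subtype_mk _
      continuous_invFun := by
        have : Continuous (fun y : ↥(range Φ) => (e.symm y : X)) := hsymm_cont
        exact this }
  have hYeq : A ∩ closure (range Φ) = range Φ :=
    subset_antisymm hclosed
      (subset_inter (range_subset_iff.2 ΦmemA) subset_closure)
  refine ⟨A ∩ closure (range Φ), closure (range Φ), isClosed_closure, rfl, ?_⟩
  exact ⟨(Homeomorph.setCongr hYeq).trans hhomeo.symm⟩

end Constr

end Stmt8

theorem stmt_8 (A : Set (ℕ → ℕ)) (hA : MeasureTheory.AnalyticSet A) :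
    Xor'
      (∃ K : ℕ → Set (ℕ → ℕ), (∀ n, IsCompact (K n)) ∧ A = ⋃ n, K n)
      (∃ Y C : Set (ℕ → ℕ), IsClosed C ∧ Y = A ∩ C ∧
        Nonempty (Y ≃ₜ (ℕ → ℕ))) := by
  classical
  have hA' := hA
  rw [MeasureTheory.AnalyticSet] at hA'
  rcases hA' with rfl | ⟨f, hfc, hfr⟩
  · refine Or.inl ⟨⟨fun _ => ∅, fun _ => isCompact_empty, by simp⟩, ?_⟩
    rintro ⟨Y, C, hC, rfl, ⟨e⟩⟩
    simpa using (e.symm (fun _ => 0)).2.1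
  · by_cases hlight : Stmt8.Light A A
    · refine Or.inl ⟨Stmt8.sigma_iff_light.2 hlight, ?_⟩
      rintro ⟨Y, C, hC, rfl, ⟨e⟩⟩
      obtain ⟨K, hK, hAK⟩ := Stmt8.sigma_iff_light.2 hlight
      have hsig : IsSigmaCompact (A ∩ C) := by
        have h0 : A ∩ C = ⋃ n, (K n ∩ C) := by rw [hAK, iUnion_inter]
        rw [h0]
        exact isSigmaCompact_iUnion _ fun n => ((hK n).inter_right hC).isSigmaCompact
      have h1 : IsSigmaCompact (univ : Set ↥(A ∩ C)) := by
        rw [Subtype.isSigmaCompact_iff]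
        rwa [image_univ, Subtype.range_coe]
      have h2 : IsSigmaCompact (univ : Set (ℕ → ℕ)) := by
        have h3 := h1.image e.continuous
        rwa [image_univ, e.surjective.range_eq] at h3
      exact Stmt8.not_isSigmaCompact_univ h2
    · refine Or.inr ⟨Stmt8.main_construction hfc hfr hlight, ?_⟩
      rintro ⟨K, hK, hAK⟩
      exact hlight (Stmt8.sigma_iff_light.1 ⟨K, hK, hAK⟩)
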